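/- Let E be a row-finite graph. E is acyclic if and only if for every nonzero a ∈ M_E^{gr} and every negative integer n, the elements ^n a and a are incomparable (neither ^n a ≤ a nor a ≤ ^n a holds strictly, and they are not equal). -/

import Mathlib

set_option linter.unusedSectionVars false

/-- The algebraic preorder on a commutative monoid: `a ≤ b` iff `b = a + c` for some `c`. -/
def algLE {M : Type*} [AddCommMonoid M] (a b : M) : Prop := ∃ c, b = a + c

/-- A row-finite directed graph: vertices `V`, edges `Ed`, source `s`, range `r`,
and for each vertex the (finite) set of edges it emits. -/
structure RFGraph (V : Type) (Ed : Type) where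
  s : Ed → V
  r : Ed → V
  emit : V → Finset Ed
  mem_emit : ∀ e v, e ∈ emit v ↔ s e = v

namespace RFGraph

variable {V Ed : Type} [DecidableEq V] (G : RFGraph V Ed)

/-- The one-step rewriting relation `→₁` on the free commutative monoid `Multiset V`:
replace one occurrence of a non-sink vertex `v` by the sum of ranges of edges emitted by `v`. -/
def Step1 (a b : Multiset V) : Prop :=
  ∃ v : V, v ∈ a ∧ G.emit v ≠ ∅ ∧ b = a.erase v + (G.emit v).val.map G.r

/-- The reflexive-transitive closure `→` of `→₁`. -/
def Step : Multiset V → Multiset V → Prop := Relation.ReflTransGen G.Step1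

/-- The congruence on the free commutative monoid generated by `→₁`. -/
def gcon : AddCon (Multiset V) := addConGen G.Step1

/-- The graph monoid `M_E`. -/
def GM := G.gcon.Quotient

instance : AddCommMonoid G.GM := inferInstanceAs (AddCommMonoid G.gcon.Quotient)

/-- One-step rewriting for the talented monoid: replace `v(i)` by `Σ_{e ∈ s⁻¹(v)} r(e)(i+1)`. -/
def TStep1 (a b : Multiset (V × ℤ)) : Prop :=
  ∃ (v : V) (i : ℤ), (v, i) ∈ a ∧ G.emit v ≠ ∅ ∧
    b = a.erase (v, i) + (G.emit v).val.map (fun e => (G.r e, i + 1))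

/-- The congruence generated by the talented one-step relation. -/
def tcon : AddCon (Multiset (V × ℤ)) := addConGen G.TStep1

/-- The talented monoid `M_E^{gr}`. -/
def TM := G.tcon.Quotient

instance : AddCommMonoid G.TM := inferInstanceAs (AddCommMonoid G.tcon.Quotient)

/-- The generator `v(i)` of the talented monoid. -/
def tgen (v : V) (i : ℤ) : G.TM := G.tcon.mk' {(v, i)}

/-- The shift `v(i) ↦ v(i+n)` on the free commutative monoid `Multiset (V × ℤ)`. -/
def shiftMul (n : ℤ) : Multiset (V × ℤ) →+ Multiset (V × ℤ) where
  toFun a := a.map fun p => (p.1, p.2 + n)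
  map_zero' := rfl
  map_add' a b := Multiset.map_add (fun p => (p.1, p.2 + n)) a b

lemma shift_inj (n : ℤ) : Function.Injective (fun p : V × ℤ => (p.1, p.2 + n)) := by
  rintro ⟨a, b⟩ ⟨c, d⟩ h
  simp only [Prod.mk.injEq] at h
  exact Prod.ext h.1 (by omega)

lemma tstep1_shift (n : ℤ) {a b : Multiset (V × ℤ)} (h : G.TStep1 a b) :
    G.TStep1 (shiftMul n a) (shiftMul n b) := by
  obtain ⟨v, i, hv, hne, rfl⟩ := h
  refine ⟨v, i + n, Multiset.mem_map.2 ⟨(v, i), hv, rfl⟩, hne, ?_⟩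
  show Multiset.map _ _ = _
  rw [Multiset.map_add]
  congr 1
  · exact (Multiset.map_erase _ (shift_inj n) (v, i) a)
  · rw [Multiset.map_map]
    congr 1
    funext e
    simp only [Function.comp_apply]
    congr 1
    omega

lemma tcon_shift (n : ℤ) {a b : Multiset (V × ℤ)} (h : G.tcon a b) :
    G.tcon (shiftMul n a) (shiftMul n b) := by
  have hle : addConGen G.TStep1 ≤
      { r := fun a b => G.tcon (shiftMul n a) (shiftMul n b)
        iseqv := ⟨fun _ => G.tcon.refl _, fun h => G.tcon.symm h,
          fun h₁ h₂ => G.tcon.trans h₁ h₂⟩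
        add' := fun h₁ h₂ => by
          simpa only [map_add] using G.tcon.add h₁ h₂ } := by
    refine AddCon.addConGen_le.2 fun x y hxy => ?_
    exact AddConGen.Rel.of _ _ (G.tstep1_shift n hxy)
  exact hle h

/-- The `ℤ`-action on the talented monoid, `ⁿ(v(i)) = v(i+n)`. -/
def tshift (n : ℤ) : G.TM →+ G.TM :=
  G.tcon.lift (G.tcon.mk'.comp (shiftMul n)) (by
    intro a b h
    show G.tcon.mk' (shiftMul n a) = G.tcon.mk' (shiftMul n b)
    exact (AddCon.eq _).2 (G.tcon_shift n h))

/-- Reachability: there is a (possibly trivial) path from `u` to `v`. -/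
def Reaches (u v : V) : Prop :=
  Relation.ReflTransGen (fun a b => ∃ e : Ed, G.s e = a ∧ G.r e = b) u v

/-- A cycle: a nonempty path of edges, closed up, with distinct source vertices. -/
def IsCycle (p : List Ed) : Prop :=
  ∃ h : p ≠ [], List.Chain' (fun e f => G.r e = G.s f) p ∧
    G.r (p.getLast h) = G.s (p.head h) ∧ (p.map G.s).Nodup

/-- The cycle `p` has an exit: some vertex on it emits an edge not on the cycle. -/
def HasExit (p : List Ed) : Prop :=
  ∃ e : Ed, (∃ f ∈ p, G.s e = G.s f) ∧ e ∉ p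

/-- The cycle `p` has no exit: every vertex on it emits exactly its cycle edge. -/
def NoExit (p : List Ed) : Prop :=
  ∀ e ∈ p, G.emit (G.s e) = {e}

/-- `ℤ`-order-ideals of the talented monoid. -/
def IsOrderIdeal (I : Set G.TM) : Prop :=
  (0 : G.TM) ∈ I ∧ (∀ a b : G.TM, a ∈ I → b ∈ I → a + b ∈ I) ∧
    (∀ (n : ℤ) (a : G.TM), a ∈ I → G.tshift n a ∈ I) ∧
    (∀ a b : G.TM, algLE a b → b ∈ I → a ∈ I)

/-- The smallest `ℤ`-order-ideal of `M_E^{gr}` containing `v(0)`. -/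
def genIdeal (v : V) : Set G.TM :=
  ⋂₀ {I : Set G.TM | G.IsOrderIdeal I ∧ G.tgen v 0 ∈ I}

/-- Minimality in the talented monoid: `0 ≠ b ≤ a` implies `a ≤ b`. -/
def TMin (a : G.TM) : Prop := ∀ b : G.TM, b ≠ 0 → algLE b a → algLE a b

/-- The covering graph `\bar E`. -/
def cover : RFGraph (V × ℤ) (Ed × ℤ) where
  s p := (G.s p.1, p.2)
  r p := (G.r p.1, p.2 + 1)
  emit p := (G.emit p.1).map ⟨fun e => (e, p.2), fun a b h => by
    simpa using congrArg Prod.fst h⟩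
  mem_emit := by
    rintro ⟨e, n⟩ ⟨v, m⟩
    simp only [Finset.mem_map, Function.Embedding.coeFn_mk, Prod.mk.injEq, G.mem_emit]
    constructor
    · rintro ⟨a, ha, rfl, rfl⟩; exact ⟨ha, rfl⟩
    · rintro ⟨rfl, rfl⟩; first | exact ⟨e, rfl, rfl, rfl⟩ | exact ⟨e, rfl, rfl⟩ | exact ⟨e, by simp⟩

/-- The set of vertices on a cycle. -/
def cycVerts (p : List Ed) : Set V := {v | ∃ e ∈ p, G.s e = v}

end RFGraph

/-!
A cycle of length `k` at `v` gives `v(k) ≤ v(0) = ⁻ᵏ(v(k))`.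

Conversely, an equation `A = ⁿA + C` (or `ⁿA = A + C`) between representatives in the free
commutative monoid on `E⁰ × ℤ` is derived by finitely many rewriting steps, at the vertices of
some finite set `R`. If `E` is acyclic, every path whose vertices but the last are non-sinks in
`R` is finite, and sending `v(i)` to the multiset of levels `i + ℓ` at which the maximal such
paths from `v` end is invariant under these steps. This weight is a nonzero multiset of integers
for `A ≠ 0`, and shifting `A` by `n` translates it by `n`; comparing cardinalities and then sums
of the two sides forces `n = 0`.
-/

theorem algLE_trans {M : Type*} [AddCommMonoid M] {a b c : M}
    (hab : algLE a b) (hbc : algLE b c) : algLE a c := by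
  obtain ⟨x, rfl⟩ := hab
  obtain ⟨y, rfl⟩ := hbc
  exact ⟨x + y, add_assoc a x y⟩

theorem Multiset.eq_zero_of_map_add_le {S : Multiset ℤ} {m : ℤ} (hm : m ≠ 0)
    (h : S.map (· + m) ≤ S) : S = 0 := by
  have hS : S.map (· + m) = S := Multiset.eq_of_le_of_card_le h (by simp)
  have hsum := congrArg Multiset.sum hS
  rw [Multiset.sum_map_add, Multiset.map_id', Multiset.map_const', Multiset.sum_replicate,
    add_eq_left, nsmul_eq_mul, mul_eq_zero] at hsum
  simpa [hm] using hsum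

theorem Multiset.eq_zero_of_le_map_add {S : Multiset ℤ} {m : ℤ} (hm : m ≠ 0)
    (h : S ≤ S.map (· + m)) : S = 0 := by
  refine Multiset.eq_zero_of_map_add_le (neg_ne_zero.2 hm) ?_
  simpa [Multiset.map_map, Function.comp_def] using Multiset.map_le_map (f := (· + -m)) h

namespace RFGraph

variable {V Ed : Type} [DecidableEq V] (G : RFGraph V Ed)

-- `EdgeFrom R w v` puts `w` below `v`: well-foundedness rules out infinite walks inside `R`.
def EdgeFrom (R : Finset V) (w v : V) : Prop := v ∈ R ∧ ∃ e, G.s e = v ∧ G.r e = w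

theorem exists_isCycle_of_walk (f : ℕ → V) (e : ℕ → Ed) (hs : ∀ n, G.s (e n) = f n)
    (hr : ∀ n, G.r (e n) = f (n + 1)) (hrep : ∃ j, ∃ i < j, f i = f j) :
    ∃ p, G.IsCycle p := by
  classical
  -- cutting the walk at its first repeated vertex makes the sources distinct
  obtain ⟨i, hij, hfij⟩ := Nat.find_spec hrep
  set j := Nat.find hrep
  have hinj : ∀ a < j, ∀ b < j, f a = f b → a = b := by
    intro a ha b hb hab
    by_contra hne
    rcases Nat.lt_or_gt_of_ne hne with h | h
    · exact Nat.find_min hrep hb ⟨a, h, hab⟩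
    · exact Nat.find_min hrep ha ⟨b, h, hab.symm⟩
  have hne : (List.range' i (j - i)).map e ≠ [] := by
    simp only [ne_eq, List.map_eq_nil_iff, List.range'_eq_nil_iff]
    omega
  refine ⟨_, hne, ?_, ?_, ?_⟩
  · refine List.isChain_map _ |>.2 ((List.isChain_range' i (j - i) 1).imp ?_)
    rintro a b rfl
    rw [hr, hs]
  · rw [List.getLast_map, List.head_map, List.getLast_range', List.head_range', hr, hs, hfij]
    congr 1
    omega
  · rw [List.map_map]
    refine List.Nodup.map_on ?_ List.nodup_range'
    intro a ha b hb hab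
    simp only [List.mem_range'_1] at ha hb
    exact hinj a (by omega) b (by omega) (by simpa [hs] using hab)

theorem wellFounded_edgeFrom (hacyc : ¬ ∃ p, G.IsCycle p) (R : Finset V) :
    WellFounded (G.EdgeFrom R) := by
  refine wellFounded_iff_isEmpty_descending_chain.2 ⟨fun ⟨f, hf⟩ => hacyc ?_⟩
  choose hR e hs hr using hf
  obtain ⟨a, b, hab, heq⟩ :=
    Finite.exists_ne_map_eq_of_infinite (fun n => (⟨f n, hR n⟩ : R))
  have heq : f a = f b := congrArg Subtype.val heq
  refine G.exists_isCycle_of_walk f e hs hr ?_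
  rcases Nat.lt_or_gt_of_ne hab with h | h
  exacts [⟨b, a, h, heq⟩, ⟨a, b, h, heq.symm⟩]

def TStep1In (R : Finset V) (X Y : Multiset (V × ℤ)) : Prop :=
  ∃ v ∈ R, ∃ i : ℤ, (v, i) ∈ X ∧ G.emit v ≠ ∅ ∧
    Y = X.erase (v, i) + (G.emit v).val.map (fun e => (G.r e, i + 1))

theorem exists_finset_of_tcon {X Y : Multiset (V × ℤ)} (h : G.tcon X Y) :
    ∃ R : Finset V, addConGen (G.TStep1In R) X Y := by
  have mono : ∀ {R R' : Finset V}, R ⊆ R' →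
      addConGen (G.TStep1In R) ≤ addConGen (G.TStep1In R') :=
    fun hRR' => AddCon.addConGen_mono fun _ _ ⟨v, hv, hstep⟩ => ⟨v, hRR' hv, hstep⟩
  induction h with
  | of X Y h =>
    obtain ⟨v, hstep⟩ := h
    exact ⟨{v}, .of _ _ ⟨v, Finset.mem_singleton_self v, hstep⟩⟩
  | refl X => exact ⟨∅, .refl X⟩
  | symm _ ih =>
    obtain ⟨R, h⟩ := ih
    exact ⟨R, .symm h⟩
  | trans _ _ ih₁ ih₂ =>
    obtain ⟨R₁, h₁⟩ := ih₁
    obtain ⟨R₂, h₂⟩ := ih₂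
    exact ⟨R₁ ∪ R₂,
      .trans (mono Finset.subset_union_left h₁) (mono Finset.subset_union_right h₂)⟩
  | add _ _ ih₁ ih₂ =>
    obtain ⟨R₁, h₁⟩ := ih₁
    obtain ⟨R₂, h₂⟩ := ih₂
    exact ⟨R₁ ∪ R₂,
      .add (mono Finset.subset_union_left h₁) (mono Finset.subset_union_right h₂)⟩

theorem shiftMul_apply (m : ℤ) (X : Multiset (V × ℤ)) :
    shiftMul m X = X.map fun x => (x.1, x.2 + m) := rfl

section Weight

variable {G} {R : Finset V} (hR : WellFounded (G.EdgeFrom R))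

/-- The lengths of the maximal paths from `v` that continue only from non-sink vertices of `R`. -/
noncomputable def pathLengths : V → Multiset ℕ :=
  hR.fix fun v rec =>
    if h : v ∈ R ∧ (G.emit v).Nonempty then
      (G.emit v).attach.val.bind fun e =>
        (rec (G.r e) ⟨h.1, e, (G.mem_emit _ _).1 e.2, rfl⟩).map Nat.succ
    else {0}

theorem pathLengths_eq_bind {v : V} (hv : v ∈ R) (hne : G.emit v ≠ ∅) :
    pathLengths hR v = (G.emit v).val.bind fun e => (pathLengths hR (G.r e)).map Nat.succ := by
  rw [pathLengths, hR.fix_eq, dif_pos ⟨hv, Finset.nonempty_iff_ne_empty.2 hne⟩]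
  conv_rhs => rw [← Multiset.attach_map_val (G.emit v).val, Multiset.bind_map]
  rfl

theorem pathLengths_ne_zero (v : V) : pathLengths hR v ≠ 0 := by
  induction v using hR.induction with
  | _ v ih =>
    rw [pathLengths, hR.fix_eq]
    split_ifs with h
    · obtain ⟨e, he⟩ := h.2
      obtain ⟨k, hk⟩ :=
        Multiset.exists_mem_of_ne_zero (ih (G.r e) ⟨h.1, e, (G.mem_emit _ _).1 he, rfl⟩)
      refine Multiset.card_pos.1 (Multiset.card_pos_iff_exists_mem.2 ⟨k.succ, ?_⟩)
      exact Multiset.mem_bind.2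
        ⟨⟨e, he⟩, Multiset.mem_attach _ _, Multiset.mem_map_of_mem _ hk⟩
    · exact Multiset.singleton_ne_zero 0

noncomputable def weight : Multiset (V × ℤ) →+ Multiset ℤ where
  toFun X := X.bind fun x => (pathLengths hR x.1).map fun k : ℕ => (k : ℤ) + x.2
  map_zero' := Multiset.zero_bind _
  map_add' X Y := Multiset.add_bind X Y _

theorem weight_apply (X : Multiset (V × ℤ)) :
    weight hR X = X.bind fun x => (pathLengths hR x.1).map fun k : ℕ => (k : ℤ) + x.2 := rfl

theorem weight_shiftMul (m : ℤ) (X : Multiset (V × ℤ)) :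
    weight hR (shiftMul m X) = (weight hR X).map (· + m) := by
  rw [weight_apply, weight_apply, shiftMul_apply, Multiset.bind_map, Multiset.map_bind]
  refine Multiset.bind_congr fun x _ => ?_
  rw [Multiset.map_map]
  exact Multiset.map_congr rfl fun k _ => (add_assoc _ _ _).symm

theorem weight_eq_zero {X : Multiset (V × ℤ)} (h : weight hR X = 0) : X = 0 := by
  by_contra hX
  obtain ⟨x, hx⟩ := Multiset.exists_mem_of_ne_zero hX
  obtain ⟨k, hk⟩ := Multiset.exists_mem_of_ne_zero (pathLengths_ne_zero hR x.1)
  have : (k : ℤ) + x.2 ∈ weight hR X :=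
    Multiset.mem_bind.2 ⟨x, hx, Multiset.mem_map_of_mem _ hk⟩
  simp [h] at this

theorem weight_eq_of_tStep1In {X Y : Multiset (V × ℤ)} (h : G.TStep1In R X Y) :
    weight hR X = weight hR Y := by
  obtain ⟨v, hv, i, hmem, hne, rfl⟩ := h
  conv_lhs => rw [← Multiset.cons_erase hmem]
  rw [weight_apply, weight_apply, Multiset.cons_bind, Multiset.add_bind, add_comm,
    pathLengths_eq_bind hR hv hne, Multiset.bind_map, Multiset.map_bind]
  congr 1
  refine Multiset.bind_congr fun e _ => ?_
  rw [Multiset.map_map]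
  refine Multiset.map_congr rfl fun k _ => ?_
  simp only [Function.comp_apply, Nat.cast_succ]
  ring

theorem weight_eq_of_addConGen {X Y : Multiset (V × ℤ)} (h : addConGen (G.TStep1In R) X Y) :
    weight hR X = weight hR Y :=
  (AddCon.ker_rel _).1 <|
    AddCon.addConGen_le.2 (fun _ _ hXY => (AddCon.ker_rel _).2 (weight_eq_of_tStep1In hR hXY)) h

end Weight

theorem tshift_mk (m : ℤ) (X : Multiset (V × ℤ)) :
    G.tshift m (G.tcon.mk' X) = G.tcon.mk' (shiftMul m X) :=
  AddCon.lift_mk' _ X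

theorem tshift_tgen (m : ℤ) (v : V) (i : ℤ) : G.tshift m (G.tgen v i) = G.tgen v (i + m) :=
  G.tshift_mk m {(v, i)}

theorem exists_weight_eq (hacyc : ¬ ∃ p, G.IsCycle p) {X Y : Multiset (V × ℤ)}
    (h : G.tcon X Y) :
    ∃ (R : Finset V) (hR : WellFounded (G.EdgeFrom R)), weight hR X = weight hR Y := by
  obtain ⟨R, hXY⟩ := G.exists_finset_of_tcon h
  have hR := G.wellFounded_edgeFrom hacyc R
  exact ⟨R, hR, weight_eq_of_addConGen hR hXY⟩

theorem exists_tcon_of_algLE_mk' {X Y : Multiset (V × ℤ)}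
    (h : algLE (M := G.TM) (G.tcon.mk' X) (G.tcon.mk' Y)) : ∃ C, G.tcon Y (X + C) := by
  obtain ⟨c, hc⟩ := h
  obtain ⟨C, rfl⟩ := G.tcon.mk'_surjective c
  exact ⟨C, (AddCon.eq _).1 (hc.trans (map_add _ X C).symm)⟩

theorem not_algLE_tshift (hacyc : ¬ ∃ p, G.IsCycle p) {m : ℤ} (hm : m ≠ 0) {a : G.TM}
    (ha : a ≠ 0) : ¬ algLE (G.tshift m a) a ∧ ¬ algLE a (G.tshift m a) := by
  obtain ⟨A, rfl⟩ := G.tcon.mk'_surjective a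
  have hA : A ≠ 0 := by
    rintro rfl
    exact ha (map_zero _)
  rw [tshift_mk]
  constructor
  · intro h
    obtain ⟨C, hC⟩ := G.exists_tcon_of_algLE_mk' h
    obtain ⟨R, hR, hw⟩ := G.exists_weight_eq hacyc hC
    rw [map_add, weight_shiftMul] at hw
    exact hA <| weight_eq_zero hR <|
      Multiset.eq_zero_of_map_add_le hm ((Multiset.le_add_right _ _).trans_eq hw.symm)
  · intro h
    obtain ⟨C, hC⟩ := G.exists_tcon_of_algLE_mk' h
    obtain ⟨R, hR, hw⟩ := G.exists_weight_eq hacyc hC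
    rw [map_add, weight_shiftMul] at hw
    exact hA <| weight_eq_zero hR <|
      Multiset.eq_zero_of_le_map_add hm ((Multiset.le_add_right _ _).trans_eq hw.symm)

theorem eq_zero_iff_of_tcon {X Y : Multiset (V × ℤ)} (h : G.tcon X Y) : X = 0 ↔ Y = 0 := by
  induction h with
  | of X Y h =>
    obtain ⟨v, i, hmem, hne, rfl⟩ := h
    refine iff_of_false ?_ (by simp [hne])
    rintro rfl
    exact Multiset.notMem_zero _ hmem
  | refl X => rfl
  | symm _ ih => exact ih.symm
  | trans _ _ ih₁ ih₂ => exact ih₁.trans ih₂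
  | add _ _ ih₁ ih₂ => simp only [add_eq_zero, ih₁, ih₂]

theorem tgen_ne_zero (v : V) (i : ℤ) : G.tgen v i ≠ 0 := fun h =>
  Multiset.singleton_ne_zero (v, i) <|
    (G.eq_zero_iff_of_tcon ((AddCon.eq _).1 (h.trans (map_zero G.tcon.mk').symm))).2 rfl

theorem algLE_tgen_of_edge (e : Ed) (i : ℤ) :
    algLE (G.tgen (G.r e) (i + 1)) (G.tgen (G.s e) i) := by
  have he : e ∈ G.emit (G.s e) := (G.mem_emit e _).2 rfl
  set M := (G.emit (G.s e)).val.map fun f => (G.r f, i + 1)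
  have hstep : G.tcon {(G.s e, i)} M :=
    .of _ _ ⟨G.s e, i, Multiset.mem_singleton_self _, Finset.ne_empty_of_mem he, by simp [M]⟩
  refine ⟨G.tcon.mk' (M.erase (G.r e, i + 1)), ?_⟩
  have hsplit : G.tcon.mk' M =
      G.tcon.mk' {(G.r e, i + 1)} + G.tcon.mk' (M.erase (G.r e, i + 1)) := by
    have hmem : (G.r e, i + 1) ∈ M := Multiset.mem_map_of_mem _ he
    rw [← map_add, Multiset.singleton_add, Multiset.cons_erase hmem]
  exact ((AddCon.eq _).2 hstep).trans hsplit

theorem algLE_tgen_of_isChain (e : Ed) (p : List Ed) (i : ℤ)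
    (hp : List.IsChain (fun e f => G.r e = G.s f) (e :: p)) :
    algLE (G.tgen (G.r ((e :: p).getLast (List.cons_ne_nil e p))) (i + (p.length + 1)))
      (G.tgen (G.s e) i) := by
  induction p generalizing e i with
  | nil => simpa using G.algLE_tgen_of_edge e i
  | cons f p ih =>
    obtain ⟨hef, hp⟩ := List.isChain_cons_cons.1 hp
    refine algLE_trans ?_ (G.algLE_tgen_of_edge e i)
    rw [List.getLast_cons (List.cons_ne_nil f p), hef]
    convert ih f (i + 1) hp using 2
    simp only [List.length_cons]
    push_cast
    ring

theorem exists_algLE_tgen_of_isCycle {p : List Ed} (hp : G.IsCycle p) :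
    ∃ (v : V) (k : ℤ), 0 < k ∧ algLE (G.tgen v k) (G.tgen v 0) := by
  obtain ⟨hne, hchain, hclosed, -⟩ := hp
  obtain ⟨e, p, rfl⟩ := List.exists_cons_of_ne_nil hne
  refine ⟨G.s e, p.length + 1, by omega, ?_⟩
  simpa [hclosed] using G.algLE_tgen_of_isChain e p 0 hchain

end RFGraph

/-- The graph `E` is acyclic if and only if for every nonzero `a ∈ M_E^{gr}` and
every negative integer `n`, the elements `ⁿa` and `a` are incomparable. -/
theorem acyclic_iff_incomparable {V Ed : Type} [DecidableEq V] (G : RFGraph V Ed) :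
    (¬ ∃ p : List Ed, G.IsCycle p) ↔
      ∀ a : G.TM, a ≠ 0 → ∀ n : ℤ, n < 0 →
        ¬ algLE (G.tshift n a) a ∧ ¬ algLE a (G.tshift n a) := by
  refine ⟨fun hacyc a ha n hn => G.not_algLE_tshift hacyc hn.ne ha, ?_⟩
  rintro hinc ⟨p, hp⟩
  obtain ⟨v, k, hk, hle⟩ := G.exists_algLE_tgen_of_isCycle hp
  refine (hinc _ (G.tgen_ne_zero v k) (-k) (by omega)).2 ?_
  rwa [G.tshift_tgen, add_neg_cancel]
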